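/- Let κ > 0, σ > 0, y > 0 and ε > 0 be real numbers with κ − σ + y ≠ 0. Define x = [σ(κ+y)² + ε(κ+1)²(κ−σ+2y) − √((ε(κ+1)²(κ−σ) + σ(κ+y)²)² + 4ε(κ+1)²σ²y(κ+y))] / (2ε(κ+1)(κ−σ+y)). Then x exactly satisfies the implicit CSP one-iteration SIM equation for the MM system: y − x(κ+y)/(κ+1) + ε (κ+1−x)(σx + y − xy + κ(y−x))/(σ(κ+y)) = 0. -/

import Mathlib

/-- Explicit SIM approximation of the Michaelis–Menten slow subsystem obtained by the
CSP method with one iteration. -/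
noncomputable def MMcsp (κ σ y ε : ℝ) : ℝ :=
  (σ * (κ + y) ^ 2 + ε * (κ + 1) ^ 2 * (κ - σ + 2 * y) -
      Real.sqrt ((ε * (κ + 1) ^ 2 * (κ - σ) + σ * (κ + y) ^ 2) ^ 2 +
        4 * ε * (κ + 1) ^ 2 * σ ^ 2 * y * (κ + y))) /
    (2 * ε * (κ + 1) * (κ - σ + y))

/-!
Clearing the denominators `(κ + 1) σ (κ + y)` turns the implicit CSP equation into the quadratic
`a x² - b x + c = 0` with `a = ε (κ + 1) (κ - σ + y)`, `b = σ (κ + y)² + ε (κ + 1)² (κ - σ + 2y)`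
and `c = (κ + 1) y (σ (κ + y) + ε (κ + 1)²)`. Its discriminant `b² - 4ac` is the radicand in
`MMcsp`, which is nonnegative for positive parameters, so `MMcsp` is the root `(b - √(b² - 4ac)) / 2a`.
-/

theorem mm_csp_implicit_eq_zero_iff {κ σ y ε x : ℝ} (hκ : κ + 1 ≠ 0) (hσ : σ ≠ 0)
    (hκy : κ + y ≠ 0) :
    y - x * (κ + y) / (κ + 1) +
        ε * (κ + 1 - x) * (σ * x + y - x * y + κ * (y - x)) / (σ * (κ + y)) = 0 ↔
      ε * (κ + 1) * (κ - σ + y) * (x * x) +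
          -(σ * (κ + y) ^ 2 + ε * (κ + 1) ^ 2 * (κ - σ + 2 * y)) * x +
          (κ + 1) * y * (σ * (κ + y) + ε * (κ + 1) ^ 2) = 0 := by
  have hden : (κ + 1) * (σ * (κ + y)) ≠ 0 := mul_ne_zero hκ (mul_ne_zero hσ hκy)
  have hcleared : y - x * (κ + y) / (κ + 1) +
        ε * (κ + 1 - x) * (σ * x + y - x * y + κ * (y - x)) / (σ * (κ + y)) =
      (ε * (κ + 1) * (κ - σ + y) * (x * x) +
          -(σ * (κ + y) ^ 2 + ε * (κ + 1) ^ 2 * (κ - σ + 2 * y)) * x +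
          (κ + 1) * y * (σ * (κ + y) + ε * (κ + 1) ^ 2)) / ((κ + 1) * (σ * (κ + y))) := by
    field_simp
    ring
  rw [hcleared, div_eq_zero_iff, or_iff_left hden]

theorem mm_csp_discrim (κ σ y ε : ℝ) :
    discrim (ε * (κ + 1) * (κ - σ + y))
        (-(σ * (κ + y) ^ 2 + ε * (κ + 1) ^ 2 * (κ - σ + 2 * y)))
        ((κ + 1) * y * (σ * (κ + y) + ε * (κ + 1) ^ 2)) =
      (ε * (κ + 1) ^ 2 * (κ - σ) + σ * (κ + y) ^ 2) ^ 2 +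
        4 * ε * (κ + 1) ^ 2 * σ ^ 2 * y * (κ + y) := by
  rw [discrim]
  ring

theorem mm_csp_implicit_quadratic {κ σ y ε : ℝ} (hκ : 0 < κ) (hy : 0 < y) (hε : 0 < ε)
    (hne : κ - σ + y ≠ 0) :
    ε * (κ + 1) * (κ - σ + y) * (MMcsp κ σ y ε * MMcsp κ σ y ε) +
        -(σ * (κ + y) ^ 2 + ε * (κ + 1) ^ 2 * (κ - σ + 2 * y)) * MMcsp κ σ y ε +
        (κ + 1) * y * (σ * (κ + y) + ε * (κ + 1) ^ 2) = 0 := by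
  have ha : ε * (κ + 1) * (κ - σ + y) ≠ 0 := mul_ne_zero (by positivity) hne
  have hdiscrim := mm_csp_discrim κ σ y ε
  have hD : 0 ≤ (ε * (κ + 1) ^ 2 * (κ - σ) + σ * (κ + y) ^ 2) ^ 2 +
      4 * ε * (κ + 1) ^ 2 * σ ^ 2 * y * (κ + y) := by positivity
  rw [quadratic_eq_zero_iff ha (hdiscrim.trans (Real.mul_self_sqrt hD).symm)]
  right
  rw [MMcsp, neg_neg]
  ring_nf

/-- The explicit CSP one-iteration SIM approximation exactly satisfies the implicit CSP
one-iteration SIM equation for the Michaelis–Menten system. -/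
theorem mm_csp_satisfies_implicit (κ σ y ε : ℝ) (hκ : 0 < κ) (hσ : 0 < σ) (hy : 0 < y)
    (hε : 0 < ε) (hne : κ - σ + y ≠ 0) :
    y - MMcsp κ σ y ε * (κ + y) / (κ + 1) +
      ε * (κ + 1 - MMcsp κ σ y ε) *
        (σ * MMcsp κ σ y ε + y - MMcsp κ σ y ε * y + κ * (y - MMcsp κ σ y ε)) /
        (σ * (κ + y)) = 0 :=
  (mm_csp_implicit_eq_zero_iff (by positivity) hσ.ne' (by positivity)).2
    (mm_csp_implicit_quadratic hκ hy hε hne)
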